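/- Let c ∈ (1,2) and ε ∈ (0, min{1/4, 2−c}). There exists C > 0 such that for all real t ≥ (c·2^c)^{1/ε} and all (ξ₁,ξ₂) ∈ ℝ² with |ξ₂| ≤ t^{ε−c} and |ξ₁| > t^{2ε−1}, we have |(1/t)∫_0^t e^{-2πi(ξ₂s^c + ξ₁s)} ds| ≤ C·t^{-ε/4}. -/

import Mathlib

open MeasureTheory intervalIntegral

/-- `e x = e^{2πix}` -/
noncomputable def e (x : ℝ) : ℂ := Complex.exp (2 * Real.pi * Complex.I * x)

/-!
On `[1, t]` the phase `s ↦ -(ξ₂ s^c + ξ₁ s)` has derivative of modulus at least `|ξ₁| / 2`,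
since `|ξ₂| ≤ t^(ε-c)` makes `c |ξ₂| s^(c-1) ≤ c t^(ε-1) ≤ t^(2ε-1) / 2 < |ξ₁| / 2`, and its
second derivative `-c (c-1) ξ₂ s^(c-2)` has constant sign. Van der Corput's first derivative test
(integration by parts against `(2πi φ')⁻¹`) bounds that part of the integral by `4 / (π |ξ₁|)`,
and the part over `[0, 1]` is at most `1`. After division by `t` this is
`O(t⁻¹ + t^(-2ε)) = O(t^(-ε/4))`.
-/

open Set Real

lemma norm_e (x : ℝ) : ‖e x‖ = 1 := by
  rw [e, mul_right_comm]
  exact_mod_cast Complex.norm_exp_ofReal_mul_I (2 * π * x)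

section VanDerCorput

variable {a b lam : ℝ} {φ φ' φ'' : ℝ → ℝ}

lemma integral_abs_div_sq_le (hab : a ≤ b) (hlam : 0 < lam)
    (hφ' : ∀ s ∈ Icc a b, HasDerivAt φ' (φ'' s) s) (hφ'' : ContinuousOn φ'' (Icc a b))
    (hlow : ∀ s ∈ Icc a b, lam ≤ |φ' s|)
    (hsign : (∀ s ∈ Icc a b, 0 ≤ φ'' s) ∨ ∀ s ∈ Icc a b, φ'' s ≤ 0) :
    ∫ s in a..b, |φ'' s| / φ' s ^ 2 ≤ 2 / lam := by
  have hne : ∀ s ∈ Icc a b, φ' s ≠ 0 := fun s hs => abs_pos.mp (hlam.trans_le (hlow s hs))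
  have hinv : ∀ s ∈ Icc a b, |(φ' s)⁻¹| ≤ 1 / lam := fun s hs => by
    rw [abs_inv, one_div]; exact inv_anti₀ hlam (hlow s hs)
  have hftc : ∫ s in a..b, φ'' s / φ' s ^ 2 = (φ' a)⁻¹ - (φ' b)⁻¹ := by
    have hcont : ContinuousOn (fun s => φ'' s / φ' s ^ 2) (Icc a b) :=
      hφ''.div (.pow (fun s hs => (hφ' s hs).continuousAt.continuousWithinAt) 2)
        fun s hs => pow_ne_zero 2 (hne s hs)
    have hderiv : ∀ s ∈ uIcc a b, HasDerivAt (fun s => -(φ' s)⁻¹) (φ'' s / φ' s ^ 2) s :=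
      fun s hs => by
        rw [uIcc_of_le hab] at hs
        exact ((hφ' s hs).inv (hne s hs)).neg.congr_deriv (by ring)
    rw [integral_eq_sub_of_hasDerivAt hderiv (hcont.intervalIntegrable_of_Icc hab)]
    ring
  calc ∫ s in a..b, |φ'' s| / φ' s ^ 2 ≤ |∫ s in a..b, φ'' s / φ' s ^ 2| := by
        rcases hsign with h | h
        · refine le_of_eq_of_le (integral_congr fun s hs => ?_) (le_abs_self _)
          simp only [abs_of_nonneg (h s (uIcc_of_le hab ▸ hs))]
        · refine le_of_eq_of_le (integral_congr fun s hs => ?_)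
            (intervalIntegral.integral_neg.trans_le (neg_le_abs _))
          simp only [abs_of_nonpos (h s (uIcc_of_le hab ▸ hs)), neg_div]
    _ ≤ |(φ' a)⁻¹| + |(φ' b)⁻¹| := hftc ▸ abs_sub _ _
    _ ≤ 1 / lam + 1 / lam :=
      add_le_add (hinv a (left_mem_Icc.2 hab)) (hinv b (right_mem_Icc.2 hab))
    _ = 2 / lam := by ring

/-- Van der Corput's first derivative test. -/
theorem norm_integral_exp_I_mul_le (hab : a ≤ b) (hlam : 0 < lam)
    (hφ : ∀ s ∈ Icc a b, HasDerivAt φ (φ' s) s) (hφ' : ∀ s ∈ Icc a b, HasDerivAt φ' (φ'' s) s)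
    (hφ'' : ContinuousOn φ'' (Icc a b)) (hlow : ∀ s ∈ Icc a b, lam ≤ |φ' s|)
    (hsign : (∀ s ∈ Icc a b, 0 ≤ φ'' s) ∨ ∀ s ∈ Icc a b, φ'' s ≤ 0) :
    ‖∫ s in a..b, Complex.exp (Complex.I * φ s)‖ ≤ 4 / lam := by
  have hne : ∀ s ∈ Icc a b, Complex.I * φ' s ≠ 0 := fun s hs =>
    mul_ne_zero Complex.I_ne_zero <|
      Complex.ofReal_ne_zero.2 (abs_pos.mp (hlam.trans_le (hlow s hs)))
  have hφ'c : ContinuousOn φ' (Icc a b) := fun s hs =>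
    (hφ' s hs).continuousAt.continuousWithinAt
  have hφc : ContinuousOn φ (Icc a b) := fun s hs => (hφ s hs).continuousAt.continuousWithinAt
  -- integrate by parts, writing `exp (I φ) = (I φ')⁻¹ * (exp (I φ))'`
  set u : ℝ → ℂ := fun s => (Complex.I * φ' s)⁻¹
  set u' : ℝ → ℂ := fun s => -(Complex.I * φ'' s) / (Complex.I * φ' s) ^ 2
  set v : ℝ → ℂ := fun s => Complex.exp (Complex.I * φ s)
  have hu : ∀ s ∈ uIcc a b, HasDerivAt u (u' s) s := fun s hs => by
    rw [uIcc_of_le hab] at hs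
    exact ((hφ' s hs).ofReal_comp.const_mul Complex.I).inv (hne s hs)
  have hv : ∀ s ∈ uIcc a b, HasDerivAt v (v s * (Complex.I * φ' s)) s := fun s hs => by
    rw [uIcc_of_le hab] at hs
    exact ((hφ s hs).ofReal_comp.const_mul Complex.I).cexp
  have hparts := integral_mul_deriv_eq_deriv_mul hu hv
    (ContinuousOn.intervalIntegrable_of_Icc hab <| by
      refine .div (by fun_prop) ((continuousOn_const.mul ?_).pow 2) fun s hs =>
        pow_ne_zero 2 (hne s hs)
      exact Complex.continuous_ofReal.comp_continuousOn hφ'c)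
    (ContinuousOn.intervalIntegrable_of_Icc hab <| by fun_prop)
  have hnorm_v : ∀ s, ‖v s‖ = 1 := fun s => by simp [v, Complex.norm_exp]
  have hnorm_u : ∀ s ∈ Icc a b, ‖u s * v s‖ ≤ 1 / lam := fun s hs => by
    simpa [u, hnorm_v, abs_inv] using inv_anti₀ hlam (hlow s hs)
  have hnorm_u'v : ∀ s ∈ Icc a b, ‖u' s * v s‖ = |φ'' s| / φ' s ^ 2 := fun s hs => by
    simp [u', hnorm_v, mul_pow]
  have hint : ‖∫ s in a..b, u' s * v s‖ ≤ 2 / lam := calc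
    _ ≤ ∫ s in a..b, ‖u' s * v s‖ := norm_integral_le_integral_norm hab
    _ = ∫ s in a..b, |φ'' s| / φ' s ^ 2 :=
      integral_congr fun s hs => hnorm_u'v s (uIcc_of_le hab ▸ hs)
    _ ≤ 2 / lam := integral_abs_div_sq_le hab hlam hφ' hφ'' hlow hsign
  have hexp : ∫ s in a..b, u s * (v s * (Complex.I * φ' s)) = ∫ s in a..b, v s :=
    integral_congr fun s hs => by
      rw [mul_left_comm, inv_mul_cancel₀ (hne s (uIcc_of_le hab ▸ hs)), mul_one]
  calc ‖∫ s in a..b, v s‖ = ‖u b * v b - u a * v a - ∫ s in a..b, u' s * v s‖ := by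
        rw [← hexp, hparts]
    _ ≤ ‖u b * v b‖ + ‖u a * v a‖ + ‖∫ s in a..b, u' s * v s‖ :=
      norm_sub_le_of_le (norm_sub_le _ _) le_rfl
    _ ≤ 1 / lam + 1 / lam + 2 / lam := by
      gcongr
      exacts [hnorm_u b (right_mem_Icc.2 hab), hnorm_u a (left_mem_Icc.2 hab)]
    _ = 4 / lam := by ring

theorem norm_integral_e_le (hab : a ≤ b) (hlam : 0 < lam)
    (hφ : ∀ s ∈ Icc a b, HasDerivAt φ (φ' s) s) (hφ' : ∀ s ∈ Icc a b, HasDerivAt φ' (φ'' s) s)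
    (hφ'' : ContinuousOn φ'' (Icc a b)) (hlow : ∀ s ∈ Icc a b, lam ≤ |φ' s|)
    (hsign : (∀ s ∈ Icc a b, 0 ≤ φ'' s) ∨ ∀ s ∈ Icc a b, φ'' s ≤ 0) :
    ‖∫ s in a..b, e (φ s)‖ ≤ 2 / (π * lam) := by
  have h2π : 0 < 2 * π := by positivity
  have h := norm_integral_exp_I_mul_le hab (mul_pos h2π hlam) (φ := fun s => 2 * π * φ s)
    (fun s hs => (hφ s hs).const_mul _) (fun s hs => (hφ' s hs).const_mul _)
    (continuousOn_const.mul hφ'')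
    (fun s hs => by rw [abs_mul, abs_of_pos h2π]; gcongr; exact hlow s hs)
    (hsign.imp (fun h s hs => mul_nonneg h2π.le (h s hs))
      fun h s hs => mul_nonpos_of_nonneg_of_nonpos h2π.le (h s hs))
  convert h using 1
  · simp only [e, Complex.ofReal_mul, Complex.ofReal_ofNat]
    ring_nf
  · field_simp
    ring

end VanDerCorput

section RpowPhase

variable {c ξ₁ ξ₂ s : ℝ}

lemma hasDerivAt_rpow_phase (hs : 0 < s) :
    HasDerivAt (fun s => -(ξ₂ * s ^ c + ξ₁ * s)) (-(c * ξ₂ * s ^ (c - 1) + ξ₁)) s :=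
  (((hasDerivAt_rpow_const (Or.inl hs.ne')).const_mul ξ₂).add
    ((hasDerivAt_id' s).const_mul ξ₁)).neg.congr_deriv (by ring)

lemma hasDerivAt_rpow_phase_deriv (hs : 0 < s) :
    HasDerivAt (fun s => -(c * ξ₂ * s ^ (c - 1) + ξ₁)) (-(c * (c - 1) * ξ₂ * s ^ (c - 2))) s :=
  (((hasDerivAt_rpow_const (Or.inl hs.ne')).const_mul (c * ξ₂)).add_const ξ₁).neg.congr_deriv
    (by rw [sub_sub, one_add_one_eq_two]; ring)

lemma norm_integral_e_rpow_phase_le {t : ℝ} (ht : 1 ≤ t) (hξ₁ : ξ₁ ≠ 0)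
    (hsmall : ∀ s ∈ Icc 1 t, |c * ξ₂ * s ^ (c - 1)| ≤ |ξ₁| / 2) :
    ‖∫ s in (0 : ℝ)..t, e (-(ξ₂ * s ^ c + ξ₁ * s))‖ ≤ 1 + 4 / (π * |ξ₁|) := by
  set f : ℝ → ℂ := fun s => e (-(ξ₂ * s ^ c + ξ₁ * s))
  have hf : ∀ a b, IntervalIntegrable f volume a b := fun a b =>
    (intervalIntegrable_const (c := (1 : ℂ))).mono_fun (by unfold f e; fun_prop)
      (ae_of_all _ fun s => by simp [f, norm_e])
  have hlow : ∀ s ∈ Icc 1 t, |ξ₁| / 2 ≤ |-(c * ξ₂ * s ^ (c - 1) + ξ₁)| := fun s hs => by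
    have := abs_sub_abs_le_abs_sub ξ₁ (-(c * ξ₂ * s ^ (c - 1)))
    rw [abs_neg, sub_neg_eq_add, add_comm] at this
    rw [abs_neg]
    linarith [hsmall s hs]
  have hsign : (∀ s ∈ Icc 1 t, 0 ≤ -(c * (c - 1) * ξ₂ * s ^ (c - 2))) ∨
      ∀ s ∈ Icc 1 t, -(c * (c - 1) * ξ₂ * s ^ (c - 2)) ≤ 0 := by
    have hpow : ∀ s ∈ Icc (1 : ℝ) t, 0 ≤ s ^ (c - 2) := fun s hs =>
      rpow_nonneg (zero_le_one.trans hs.1) _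
    rcases le_total 0 (c * (c - 1) * ξ₂) with h | h
    · exact .inr fun s hs => neg_nonpos.2 (mul_nonneg h (hpow s hs))
    · exact .inl fun s hs => neg_nonneg.2 (mul_nonpos_of_nonpos_of_nonneg h (hpow s hs))
  have h01 : ‖∫ s in (0 : ℝ)..1, f s‖ ≤ 1 := by
    simpa using norm_integral_le_of_norm_le_const (a := 0) (b := 1) fun s _ => (norm_e _).le
  have h1t : ‖∫ s in (1 : ℝ)..t, f s‖ ≤ 2 / (π * (|ξ₁| / 2)) :=
    norm_integral_e_le ht (half_pos (abs_pos.2 hξ₁))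
      (fun s hs => hasDerivAt_rpow_phase (by linarith [hs.1]))
      (fun s hs => hasDerivAt_rpow_phase_deriv (by linarith [hs.1]))
      (continuousOn_const.mul (continuousOn_id.rpow_const fun s hs =>
        .inl (by linarith [hs.1] : s ≠ 0))).neg
      hlow hsign
  rw [← integral_add_adjacent_intervals (hf 0 1) (hf 1 t)]
  calc _ ≤ 1 + 2 / (π * (|ξ₁| / 2)) := norm_add_le_of_le h01 h1t
    _ = 1 + 4 / (π * |ξ₁|) := by field_simp; ring

end RpowPhase

lemma abs_mul_rpow_sub_one_le {c ε ξ₂ s t : ℝ} (hc : 1 ≤ c) (hs : 0 < s) (hst : s ≤ t)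
    (hξ₂ : |ξ₂| ≤ t ^ (ε - c)) (hct : 2 * c ≤ t ^ ε) :
    |c * ξ₂ * s ^ (c - 1)| ≤ t ^ (2 * ε - 1) / 2 := by
  have ht : 0 < t := hs.trans_le hst
  calc |c * ξ₂ * s ^ (c - 1)| = c * |ξ₂| * s ^ (c - 1) := by
        rw [abs_mul, abs_mul, abs_of_nonneg (by linarith), abs_of_nonneg (rpow_nonneg hs.le _)]
    _ ≤ c * t ^ (ε - c) * t ^ (c - 1) := by gcongr
    _ = c * t ^ (ε - 1) := by rw [mul_assoc, ← rpow_add ht, sub_add_sub_cancel]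
    _ ≤ t ^ ε / 2 * t ^ (ε - 1) := by gcongr; linarith
    _ = t ^ (2 * ε - 1) / 2 := by rw [div_mul_eq_mul_div, ← rpow_add ht]; ring_nf

lemma inv_mul_one_add_div_le {ε t x : ℝ} (ht : 1 ≤ t) (hε : 0 ≤ ε) (hε4 : ε ≤ 4)
    (hx : t ^ (2 * ε - 1) ≤ x) :
    t⁻¹ * (1 + 4 / (π * x)) ≤ 3 * t ^ (-(ε / 4)) := by
  have ht0 : 0 < t := zero_lt_one.trans_le ht
  have hx0 : 0 < x := (rpow_pos_of_pos ht0 _).trans_le hx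
  have h1 : t⁻¹ ≤ t ^ (-(ε / 4)) := by
    rw [← rpow_neg_one]; exact rpow_le_rpow_of_exponent_le ht (by linarith)
  have h2 : t⁻¹ * (4 / (π * x)) ≤ 2 * t ^ (-(ε / 4)) := calc
    _ ≤ t⁻¹ * (4 / (π * t ^ (2 * ε - 1))) := by gcongr
    _ = 4 / π * t ^ (-(2 * ε)) := by
      rw [show -(2 * ε) = -1 + -(2 * ε - 1) by ring, rpow_add ht0, rpow_neg_one, rpow_neg ht0.le]
      field_simp
    _ ≤ 2 * t ^ (-(ε / 4)) := by
      gcongr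
      · rw [div_le_iff₀ pi_pos]; linarith [pi_gt_three]
      · linarith
  linarith

theorem stmt8_general (c ε : ℝ) (hc1 : 1 < c)
    (hε1 : 0 < ε) (hε2 : ε < min (1/4) (2 - c)) :
    ∃ C > (0 : ℝ), ∀ (t : ℝ), (c * (2 : ℝ) ^ c) ^ (1 / ε) ≤ t → ∀ (ξ₁ ξ₂ : ℝ),
      |ξ₂| ≤ t ^ (ε - c) → t ^ (2 * ε - 1) < |ξ₁| →
      ‖((t : ℂ))⁻¹ * ∫ s in (0 : ℝ)..t, e (-(ξ₂ * s ^ c + ξ₁ * s))‖ ≤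
        C * t ^ (-(ε / 4)) := by
  refine ⟨3, by norm_num, fun t ht ξ₁ ξ₂ hξ₂ hξ₁ => ?_⟩
  have h2c : 2 ≤ (2 : ℝ) ^ c := by
    simpa using rpow_le_rpow_of_exponent_le one_le_two hc1.le
  have hc2c : 1 ≤ c * 2 ^ c := by nlinarith
  have ht1 : 1 ≤ t := (one_le_rpow hc2c (by positivity)).trans ht
  have hct : 2 * c ≤ t ^ ε := by
    rw [one_div, rpow_inv_le_iff_of_pos (by positivity) (by positivity) hε1] at ht
    nlinarith
  have hξ₁0 : ξ₁ ≠ 0 := abs_pos.mp ((rpow_pos_of_pos (by positivity) _).trans hξ₁)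
  have hsmall : ∀ s ∈ Icc 1 t, |c * ξ₂ * s ^ (c - 1)| ≤ |ξ₁| / 2 := fun s hs =>
    (abs_mul_rpow_sub_one_le hc1.le (by linarith [hs.1]) hs.2 hξ₂ hct).trans (by linarith)
  rw [norm_mul, norm_inv, Complex.norm_real, norm_of_nonneg (by positivity)]
  calc _ ≤ t⁻¹ * (1 + 4 / (π * |ξ₁|)) := by
        gcongr; exact norm_integral_e_rpow_phase_le ht1 hξ₁0 hsmall
    _ ≤ 3 * t ^ (-(ε / 4)) :=
      inv_mul_one_add_div_le ht1 hε1.le (by linarith [min_le_left (1/4 : ℝ) (2 - c)]) hξ₁.le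

theorem stmt8 (c ε : ℝ) (hc1 : 1 < c) (hc2 : c < 2)
    (hε1 : 0 < ε) (hε2 : ε < min (1/4) (2 - c)) :
    ∃ C > (0 : ℝ), ∀ (t : ℝ), (c * (2 : ℝ) ^ c) ^ (1 / ε) ≤ t → ∀ (ξ₁ ξ₂ : ℝ),
      |ξ₂| ≤ t ^ (ε - c) → t ^ (2 * ε - 1) < |ξ₁| →
      ‖((t : ℂ))⁻¹ * ∫ s in (0 : ℝ)..t, e (-(ξ₂ * s ^ c + ξ₁ * s))‖ ≤
        C * t ^ (-(ε / 4)) :=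
  stmt8_general c ε hc1 hε1 hε2
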